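/- Let G be a simple connected graph. For every pair of distinct vertices x, y and every α ∈ [0,1], the α-Ricci curvature satisfies κ_α(x,y) ≤ (1−α)·2/d(x,y). -/

import Mathlib

open Filter Set

variable {V : Type*}

-- The `α`-lazy random walk distribution at vertex `x`.
open Classical in
noncomputable def lazyWalk (G : SimpleGraph V) [G.LocallyFinite] (α : ℝ) (x : V) : V → ℝ :=
  fun v => if v = x then α else if G.Adj x v then (1 - α) / (G.degree x : ℝ) else 0

/-- `A` is a coupling between the finitely supported distributions `m₁` and `m₂`. -/
def IsCoupling (m₁ m₂ : V → ℝ) (A : V → V → ℝ) : Prop :=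
  (Function.support fun p : V × V => A p.1 p.2).Finite ∧
  (∀ x y, 0 ≤ A x y ∧ A x y ≤ 1) ∧
  (∀ x, ∑ᶠ y, A x y = m₁ x) ∧
  (∀ y, ∑ᶠ x, A x y = m₂ y)

/-- The transportation (Wasserstein) distance between two distributions on `V`,
with respect to the graph distance of `G`. -/
noncomputable def transportDist (G : SimpleGraph V) (m₁ m₂ : V → ℝ) : ℝ :=
  sInf {w : ℝ | ∃ A : V → V → ℝ, IsCoupling m₁ m₂ A ∧
    w = ∑ᶠ p : V × V, A p.1 p.2 * (G.dist p.1 p.2 : ℝ)}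

/-- The `α`-Ricci curvature `κ_α(x,y)`. -/
noncomputable def alphaRicci (G : SimpleGraph V) [G.LocallyFinite] (α : ℝ) (x y : V) : ℝ :=
  1 - transportDist G (lazyWalk G α x) (lazyWalk G α y) / (G.dist x y : ℝ)

/-- `κ` is the Lin–Lu–Yau Ricci curvature of the pair `(x,y)`:
the limit of `κ_α(x,y)/(1-α)` as `α → 1⁻`. -/
def HasLLYCurv (G : SimpleGraph V) [G.LocallyFinite] (x y : V) (κ : ℝ) : Prop :=
  Tendsto (fun α : ℝ => alphaRicci G α x y / (1 - α)) (nhdsWithin 1 (Set.Iio 1)) (nhds κ)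

/-- `G` is positively curved: every edge has positive Lin–Lu–Yau Ricci curvature. -/
def PositivelyCurved (G : SimpleGraph V) [G.LocallyFinite] : Prop :=
  ∀ ⦃x y : V⦄, G.Adj x y → ∃ κ : ℝ, 0 < κ ∧ HasLLYCurv G x y κ

/-- `G` is planar: it admits a topological embedding in the plane, i.e. an injective
placement of the vertices together with arcs for the edges, where arcs are injective
continuous curves joining the endpoints, not passing through any other vertex, and
two arcs of distinct edges meet only in common endpoints. -/
def IsPlanar (G : SimpleGraph V) : Prop :=
  ∃ (f : V → ℝ × ℝ) (e : ∀ u v : V, G.Adj u v → Set.Icc (0:ℝ) 1 → ℝ × ℝ),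
    Function.Injective f ∧
    (∀ u v (h : G.Adj u v), Continuous (e u v h)) ∧
    (∀ u v (h : G.Adj u v), Function.Injective (e u v h)) ∧
    (∀ u v (h : G.Adj u v),
      e u v h ⟨0, Set.left_mem_Icc.mpr zero_le_one⟩ = f u ∧
      e u v h ⟨1, Set.right_mem_Icc.mpr zero_le_one⟩ = f v) ∧
    (∀ u v (h : G.Adj u v) (w : V), w ≠ u → w ≠ v → f w ∉ Set.range (e u v h)) ∧
    (∀ u v (h : G.Adj u v) (u' v' : V) (h' : G.Adj u' v'), ({u, v} : Set V) ≠ {u', v'} →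
      Set.range (e u v h) ∩ Set.range (e u' v' h') ⊆ (f '' {u, v}) ∩ (f '' {u', v'}))

/-!
A coupling of `m_x^α` and `m_y^α` moves each unit of mass from `u` to `v`, and
`d(x,y) ≤ d(x,u) + d(u,v) + d(v,y)`; integrating against the coupling, the transport cost is at
least `d(x,y)` minus the first moments of `m_x^α` about `x` and of `m_y^α` about `y`. The lazy walk
keeps mass `α` in place and moves mass `1 - α` to distance `1`, so each moment is `1 - α`, and
`W(m_x^α, m_y^α) ≥ d(x,y) - 2(1 - α)`.
-/

open Function

structure IsProbDist (m : V → ℝ) : Prop where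
  nonneg : ∀ v, 0 ≤ m v
  finsum_eq_one : ∑ᶠ v, m v = 1

namespace IsProbDist

variable {m m₁ m₂ : V → ℝ}

lemma hasFiniteSupport (h : IsProbDist m) : HasFiniteSupport m :=
  hasFiniteSupport_of_finsum_eq_one h.finsum_eq_one

lemma le_one (h : IsProbDist m) (v : V) : m v ≤ 1 :=
  h.finsum_eq_one ▸ single_le_finsum v h.hasFiniteSupport h.nonneg

lemma isCoupling_mul (h₁ : IsProbDist m₁) (h₂ : IsProbDist m₂) :
    IsCoupling m₁ m₂ fun u v => m₁ u * m₂ v := by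
  refine ⟨?_, fun u v => ⟨mul_nonneg (h₁.nonneg u) (h₂.nonneg v),
    mul_le_one₀ (h₁.le_one u) (h₂.nonneg v) (h₂.le_one v)⟩, fun u => ?_, fun v => ?_⟩
  · exact (h₁.hasFiniteSupport.prod h₂.hasFiniteSupport).subset
      fun p hp => ⟨left_ne_zero_of_mul hp, right_ne_zero_of_mul hp⟩
  · rw [← mul_finsum, h₂.finsum_eq_one, mul_one]
  · rw [← finsum_mul, h₁.finsum_eq_one, one_mul]

end IsProbDist

namespace IsCoupling

variable {m₁ m₂ : V → ℝ} {A : V → V → ℝ}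

lemma symm (hA : IsCoupling m₁ m₂ A) : IsCoupling m₂ m₁ fun u v => A v u :=
  ⟨HasFiniteSupport.fun_comp_of_injective Prod.swap_injective hA.1, fun u v => hA.2.1 v u,
    hA.2.2.2, hA.2.2.1⟩

lemma hasFiniteSupport_mul (hA : IsCoupling m₁ m₂ A) (f : V × V → ℝ) :
    HasFiniteSupport fun p : V × V => A p.1 p.2 * f p :=
  hA.1.subset (support_mul_subset_left _ _)

lemma finsum_mul_fst (hA : IsCoupling m₁ m₂ A) (f : V → ℝ) :
    ∑ᶠ p : V × V, A p.1 p.2 * f p.1 = ∑ᶠ u, m₁ u * f u := by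
  rw [finsum_curry _ (hA.hasFiniteSupport_mul _)]
  exact finsum_congr fun u => by rw [← hA.2.2.1 u, finsum_mul]

lemma finsum_mul_snd (hA : IsCoupling m₁ m₂ A) (f : V → ℝ) :
    ∑ᶠ p : V × V, A p.1 p.2 * f p.2 = ∑ᶠ v, m₂ v * f v := by
  rw [← hA.symm.finsum_mul_fst f]
  exact (finsum_comp_equiv (Equiv.prodComm V V)).symm

lemma dist_le_add_cost_add {G : SimpleGraph V} (hconn : G.Connected) (hA : IsCoupling m₁ m₂ A)
    (h₁ : ∑ᶠ u, m₁ u = 1) (x y : V) :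
    (G.dist x y : ℝ) ≤ ∑ᶠ u, m₁ u * G.dist x u + ∑ᶠ p : V × V, A p.1 p.2 * G.dist p.1 p.2 +
      ∑ᶠ v, m₂ v * G.dist y v := by
  have htri (u v : V) : (G.dist x y : ℝ) ≤ G.dist x u + G.dist u v + G.dist y v := by
    have hxu := hconn.dist_triangle (u := x) (v := u) (w := y)
    have huv := hconn.dist_triangle (u := u) (v := v) (w := y)
    rw [G.dist_comm (u := v)] at huv
    exact_mod_cast hxu.trans (by omega)
  have hfin := hA.hasFiniteSupport_mul
  calc (G.dist x y : ℝ) = ∑ᶠ p : V × V, A p.1 p.2 * G.dist x y := by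
        rw [hA.finsum_mul_fst fun _ => (G.dist x y : ℝ), ← finsum_mul, h₁, one_mul]
    _ ≤ ∑ᶠ p : V × V, A p.1 p.2 * (G.dist x p.1 + G.dist p.1 p.2 + G.dist y p.2) :=
        finsum_le_finsum' (hfin _) (hfin _)
          fun p => mul_le_mul_of_nonneg_left (htri p.1 p.2) (hA.2.1 p.1 p.2).1
    _ = _ := by
        rw [← hA.finsum_mul_fst, ← hA.finsum_mul_snd, ← finsum_add_distrib (hfin _) (hfin _),
          ← finsum_add_distrib _ (hfin _)]
        · simp only [mul_add]
        · exact (hfin _).add (hfin _)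

end IsCoupling

lemma IsProbDist.sub_le_transportDist {G : SimpleGraph V} (hconn : G.Connected) {m₁ m₂ : V → ℝ}
    (h₁ : IsProbDist m₁) (h₂ : IsProbDist m₂) (x y : V) :
    G.dist x y - ∑ᶠ u, m₁ u * G.dist x u - ∑ᶠ v, m₂ v * G.dist y v ≤ transportDist G m₁ m₂ := by
  refine le_csInf ⟨_, _, h₁.isCoupling_mul h₂, rfl⟩ ?_
  rintro w ⟨A, hA, rfl⟩
  linarith [hA.dist_le_add_cost_add hconn h₁.finsum_eq_one x y]

section LazyWalk

variable (G : SimpleGraph V) [G.LocallyFinite] (α : ℝ) (x : V)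

lemma lazyWalk_self : lazyWalk G α x x = α := by
  simp [lazyWalk]

variable {x} in
lemma lazyWalk_of_adj {v : V} (h : G.Adj x v) : lazyWalk G α x v = (1 - α) / G.degree x := by
  simp [lazyWalk, h.ne', h]

lemma support_lazyWalk_subset [DecidableEq V] :
    support (lazyWalk G α x) ⊆ ↑(insert x (G.neighborFinset x)) := by
  intro v hv
  by_cases hvx : v = x
  · simp [hvx]
  · by_contra hN
    simp_all [lazyWalk]

lemma finsum_lazyWalk_mul (f : V → ℝ) :
    ∑ᶠ v, lazyWalk G α x v * f v =
      α * f x + (1 - α) / G.degree x * ∑ v ∈ G.neighborFinset x, f v := by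
  classical
  rw [finsum_eq_sum_of_support_subset _
      ((support_mul_subset_left _ f).trans (support_lazyWalk_subset G α x)),
    Finset.sum_insert (by simp), lazyWalk_self, Finset.mul_sum]
  congr 1
  exact Finset.sum_congr rfl fun v hv => by
    rw [lazyWalk_of_adj G α ((G.mem_neighborFinset x v).1 hv)]

variable {G α x}

lemma isProbDist_lazyWalk (hα : α ∈ Icc (0 : ℝ) 1) (hd : 0 < G.degree x) :
    IsProbDist (lazyWalk G α x) where
  nonneg v := by
    unfold lazyWalk
    split_ifs
    exacts [hα.1, div_nonneg (by linarith [hα.2]) (Nat.cast_nonneg _), le_rfl]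
  finsum_eq_one := by
    have hd' : (G.degree x : ℝ) ≠ 0 := by positivity
    simpa [hd'] using finsum_lazyWalk_mul G α x 1

lemma finsum_lazyWalk_mul_dist (hd : 0 < G.degree x) :
    ∑ᶠ v, lazyWalk G α x v * G.dist x v = 1 - α := by
  have hd' : (G.degree x : ℝ) ≠ 0 := by positivity
  rw [finsum_lazyWalk_mul, SimpleGraph.dist_self, Finset.sum_congr rfl fun v hv =>
    congrArg Nat.cast (SimpleGraph.dist_eq_one_iff_adj.2 ((G.mem_neighborFinset x v).1 hv))]
  simp [hd']

end LazyWalk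

/-- For distinct vertices `x, y` of a simple connected graph and any `α ∈ [0,1]`,
`κ_α(x,y) ≤ (1-α)·2/d(x,y)`. -/
theorem alphaRicci_upper_bound (G : SimpleGraph V) [G.LocallyFinite]
    (hconn : G.Connected) (x y : V) (hxy : x ≠ y)
    (α : ℝ) (hα : α ∈ Set.Icc (0:ℝ) 1) :
    alphaRicci G α x y ≤ (1 - α) * 2 / (G.dist x y : ℝ) := by
  have hdx : 0 < G.degree x := (hconn x y).degree_pos_left hxy
  have hdy : 0 < G.degree y := (hconn x y).degree_pos_right hxy
  have hd : (0 : ℝ) < G.dist x y := by exact_mod_cast hconn.pos_dist_of_ne hxy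
  have hW := (isProbDist_lazyWalk hα hdx).sub_le_transportDist hconn
    (isProbDist_lazyWalk hα hdy) x y
  rw [finsum_lazyWalk_mul_dist hdx, finsum_lazyWalk_mul_dist hdy] at hW
  rw [alphaRicci, one_sub_div hd.ne']
  exact div_le_div_of_nonneg_right (by linarith) hd.le
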